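/- arXiv:1907.09391 — 7 statements merged into one kernel-verified Lean document; each statement's English description precedes it below -/
import Mathlib

section
/- Let a(k), b(k) ∈ K[k] with (a,b) degenerated, i.e., deg u = deg a - 1 and m₀ = -lc(u)/lc(a) ∈ ℕ, where u(k) = a(k) - b(k-1). Then every polynomial in K[k] is congruent modulo S_{a,b} to a K-linear combination of 1, k, ..., k^{d-1}, k^{d+m₀}, where d = max(deg u, deg a - 1). -/
open Polynomial

private lemma stmt3_key {K : Type*} [Field K] [CharZero K] (a b u : Polynomial K)
    (hu : u = a - b.comp (X - 1)) (d : ℕ) (hda : a.natDegree = d + 1)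
    (hdu : u.natDegree = d) (n : ℕ) :
    (a * (X + 1) ^ n - b.comp (X - 1) * X ^ n).natDegree ≤ d + n ∧
    (a * (X + 1) ^ n - b.comp (X - 1) * X ^ n).coeff (d + n)
      = a.leadingCoeff * (n : K) + u.leadingCoeff := by
  have hE : a * (X + 1) ^ n - b.comp (X - 1) * X ^ n
      = a * ((X + 1) ^ n - X ^ n) + u * X ^ n := by
    rw [hu]; ring
  rw [hE]
  have hlcu : u.coeff d = u.leadingCoeff := by rw [leadingCoeff, hdu]
  rcases Nat.eq_zero_or_pos n with hn0 | hn1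
  · subst hn0
    simp only [pow_zero, sub_self, mul_zero, zero_add, mul_one, Nat.cast_zero,
      add_zero]
    exact ⟨hdu.le, by rw [hlcu]⟩
  · have hfc : ((X + 1) ^ n - X ^ n : Polynomial K).coeff (n - 1) = (n : K) := by
      have hch : n.choose (n - 1) = n := by
        rw [← Nat.choose_symm (Nat.sub_le n 1), show n - (n - 1) = 1 by omega,
          Nat.choose_one_right]
      rw [coeff_sub, coeff_X_add_one_pow, coeff_X_pow, if_neg (by omega), hch, sub_zero]
    have hfd : ((X + 1) ^ n - X ^ n : Polynomial K).degree < (n : WithBot ℕ) := by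
      rw [degree_lt_iff_coeff_zero]
      intro m hm
      rw [coeff_sub, coeff_X_add_one_pow, coeff_X_pow]
      rcases eq_or_lt_of_le hm with h | h
      · rw [← h, Nat.choose_self, if_pos rfl]; ring
      · rw [Nat.choose_eq_zero_of_lt h, if_neg (by omega)]; simp
    have hf0 : ((X + 1) ^ n - X ^ n : Polynomial K) ≠ 0 := by
      intro h
      rw [h, coeff_zero] at hfc
      exact absurd hfc.symm (Nat.cast_ne_zero.2 (by omega))
    have hfdeq : ((X + 1) ^ n - X ^ n : Polynomial K).natDegree = n - 1 := by
      have h1 := (natDegree_lt_iff_degree_lt hf0).2 hfd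
      have h2 := le_natDegree_of_ne_zero (hfc ▸ Nat.cast_ne_zero.2 (show n ≠ 0 by omega))
      omega
    constructor
    · apply le_trans (natDegree_add_le _ _)
      apply max_le
      · exact le_trans natDegree_mul_le (by rw [hda, hfdeq]; omega)
      · exact le_trans natDegree_mul_le (by rw [hdu, natDegree_X_pow])
    · rw [coeff_add, coeff_mul_X_pow, hlcu]
      congr 1
      rw [show d + n = a.natDegree + ((X + 1) ^ n - X ^ n : Polynomial K).natDegree by
          rw [hda, hfdeq]; omega,
        coeff_mul_degree_add_degree]
      congr 1
      rw [leadingCoeff, hfdeq, hfc]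

/-- if (a,b) is degenerated, every polynomial is congruent modulo
S_{a,b} to a linear combination of 1, k, ..., k^{d-1}, k^{d+m₀}. -/
theorem stmt3 {K : Type*} [Field K] [CharZero K]
    (a b : Polynomial K) (ha : a ≠ 0) (hb : b ≠ 0)
    (u : Polynomial K) (hu : u = a - b.comp (X - 1))
    (d : ℕ) (hd : (d : ℕ) = max u.natDegree (a.natDegree - 1))
    (m₀ : ℕ) (hdeg : u.degree + 1 = a.degree)
    (hm₀ : (m₀ : K) = -u.leadingCoeff / a.leadingCoeff) :
    ∀ p : Polynomial K, ∃ x q : Polynomial K, ∃ c : K,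
      p = (a * x.comp (X + 1) - b.comp (X - 1) * x) + q + C c * X ^ (d + m₀) ∧
      q.degree < (d : WithBot ℕ) := by
  have hlca : a.leadingCoeff ≠ 0 := leadingCoeff_ne_zero.2 ha
  have hu0 : u ≠ 0 := by
    intro h
    rw [h, degree_zero] at hdeg
    rw [WithBot.bot_add] at hdeg
    exact ha (degree_eq_bot.1 hdeg.symm)
  have hnat : a.natDegree = u.natDegree + 1 := by
    rw [degree_eq_natDegree hu0, degree_eq_natDegree ha] at hdeg
    exact_mod_cast hdeg.symm
  have hd' : d = u.natDegree := by omega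
  have hda : a.natDegree = d + 1 := by omega
  have hlcu : u.leadingCoeff = -(m₀ : K) * a.leadingCoeff := by
    have h1 : (m₀ : K) * a.leadingCoeff = -u.leadingCoeff := by
      rw [hm₀, div_mul_cancel₀ _ hlca]
    linear_combination h1
  have key : ∀ n : ℕ, (a * (X + 1) ^ n - b.comp (X - 1) * X ^ n).natDegree ≤ d + n ∧
      (a * (X + 1) ^ n - b.comp (X - 1) * X ^ n).coeff (d + n)
        = a.leadingCoeff * ((n : K) - (m₀ : K)) := by
    intro n
    obtain ⟨h1, h2⟩ := stmt3_key a b u hu d hda hd'.symm n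
    exact ⟨h1, by rw [h2, hlcu]; ring⟩
  suffices H : ∀ N : ℕ, ∀ p : Polynomial K, p.degree < (N : WithBot ℕ) →
      ∃ x q : Polynomial K, ∃ c : K,
      p = (a * x.comp (X + 1) - b.comp (X - 1) * x) + q + C c * X ^ (d + m₀) ∧
      q.degree < (d : WithBot ℕ) by
    intro p
    exact H (p.natDegree + 1) p
      (lt_of_le_of_lt degree_le_natDegree (by exact_mod_cast Nat.lt_succ_self _))
  intro N
  induction N using Nat.strong_induction_on with
  | _ N ih =>
  intro p hpN
  by_cases hlt : p.degree < (d : WithBot ℕ)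
  · exact ⟨0, p, 0, by simp, hlt⟩
  · have hp0 : p ≠ 0 := by
      intro h
      rw [h, degree_zero] at hlt
      exact hlt (WithBot.bot_lt_coe d)
    have hdN : d ≤ p.natDegree := by
      by_contra h
      push_neg at h
      exact hlt (lt_of_le_of_lt degree_le_natDegree (by exact_mod_cast h))
    have hNlt : p.natDegree < N := (natDegree_lt_iff_degree_lt hp0).2 hpN
    set n := p.natDegree - d with hn
    have hNn : p.natDegree = d + n := by omega
    by_cases hnm : n = m₀
    · set c0 := p.coeff (d + m₀) with hc0
      have hp' : (p - C c0 * X ^ (d + m₀)).degree < ((p.natDegree : ℕ) : WithBot ℕ) := by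
        rw [degree_lt_iff_coeff_zero]
        intro m hm
        rw [coeff_sub, coeff_C_mul, coeff_X_pow]
        rcases eq_or_lt_of_le hm with h | h
        · rw [← h, hNn, hnm, if_pos rfl, mul_one, hc0, sub_self]
        · rw [coeff_eq_zero_of_natDegree_lt h, if_neg (by omega), mul_zero, sub_zero]
      obtain ⟨x, q, c', heq, hq⟩ := ih p.natDegree hNlt _ hp'
      refine ⟨x, q, c' + c0, ?_, hq⟩
      rw [C_add]
      linear_combination heq
    · obtain ⟨hedeg, hecoeff⟩ := key n
      have hγ : a.leadingCoeff * ((n : K) - (m₀ : K)) ≠ 0 := by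
        apply mul_ne_zero hlca
        rw [sub_ne_zero]
        exact_mod_cast hnm
      set c0 := p.coeff (d + n) / (a.leadingCoeff * ((n : K) - (m₀ : K))) with hc0
      have hp' : (p - C c0 * (a * (X + 1) ^ n - b.comp (X - 1) * X ^ n)).degree
          < ((p.natDegree : ℕ) : WithBot ℕ) := by
        rw [degree_lt_iff_coeff_zero]
        intro m hm
        rw [coeff_sub, coeff_C_mul]
        rcases eq_or_lt_of_le hm with h | h
        · rw [← h, hNn, hecoeff, hc0, div_mul_cancel₀ _ hγ, sub_self]
        · rw [coeff_eq_zero_of_natDegree_lt h,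
            coeff_eq_zero_of_natDegree_lt (lt_of_le_of_lt hedeg (by omega)),
            mul_zero, sub_zero]
      obtain ⟨x, q, c', heq, hq⟩ := ih p.natDegree hNlt _ hp'
      refine ⟨x + C c0 * X ^ n, q, c', ?_, hq⟩
      simp only [add_comp, mul_comp, C_comp, X_pow_comp]
      linear_combination heq
end

section
/- Let b ∈ K[k] with b(β+k) = b(β-k), let α ∈ K, a(k) = -b(k+α), γ = -β + (α-1)/2, and for s ≥ 0 define p_s(k) = ½( b(k+α)(k+γ+½)^s + b(k-1)(k+γ-½)^s ). Then p_s(-γ-k) = (-1)^s · p_s(-γ+k) as polynomials in k. -/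
open Polynomial

/-- with b(β+k) = b(β-k) and γ = -β + (α-1)/2, the polynomial
p_s(k) = ½(b(k+α)(k+γ+½)^s + b(k-1)(k+γ-½)^s) satisfies p_s(-γ-k) = (-1)^s p_s(-γ+k). -/
theorem stmt7 {K : Type*} [Field K] [CharZero K] (b : Polynomial K) (α β γ : K)
    (hsym : b.comp (C β + X) = b.comp (C β - X))
    (hγ : γ = -β + (α - 1) / 2) (s : ℕ)
    (ps : Polynomial K)
    (hps : ps = C (1 / 2 : K) *
      (b.comp (X + C α) * (X + C γ + C (1 / 2 : K)) ^ s
        + b.comp (X - 1) * (X + C γ - C (1 / 2 : K)) ^ s)) :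
    ps.comp (-C γ - X) = C ((-1 : K) ^ s) * ps.comp (-C γ + X) := by
  subst hps
  set δ := (α + 1) / 2 with hδ
  have key : ∀ q : K[X], b.comp (C β + q) = b.comp (C β - q) := fun q => by
    have h := congrArg (fun p => p.comp q) hsym
    simpa only [comp_assoc, add_comp, sub_comp, C_comp, X_comp] using h
  have c1 : (C (-γ + α) : K[X]) = C (β + δ) := congrArg C (by rw [hγ, hδ]; ring)
  have c2 : (C (-γ - 1) : K[X]) = C (β - δ) := congrArg C (by rw [hγ, hδ]; ring)
  simp only [map_add, map_neg, map_sub, map_one] at c1 c2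
  have h1 : b.comp (-C γ - X + C α) = b.comp (-C γ + X - 1) := by
    rw [show (-C γ - X + C α : K[X]) = C β + (C δ - X) by linear_combination c1,
        show (-C γ + X - 1 : K[X]) = C β - (C δ - X) by linear_combination c2,
        key]
  have h2 : b.comp (-C γ - X - 1) = b.comp (-C γ + X + C α) := by
    rw [show (-C γ - X - 1 : K[X]) = C β - (C δ + X) by linear_combination c2,
        show (-C γ + X + C α : K[X]) = C β + (C δ + X) by linear_combination c1,
        ← key]
  simp only [mul_comp, add_comp, sub_comp, neg_comp, pow_comp, C_comp, X_comp, one_comp,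
    comp_assoc]
  rw [h1, h2]
  rw [show (-C γ - X + C γ + C (1/2) : K[X]) = -(X - C (1/2)) by ring,
      show (-C γ - X + C γ - C (1/2) : K[X]) = -(X + C (1/2)) by ring,
      neg_pow (X - C (1/2 : K)), neg_pow (X + C (1/2 : K)),
      show (C ((-1:K)^s) : K[X]) = (-1:K[X])^s by rw [map_pow, map_neg, map_one]]
  ring
end

section
/- Let r be a positive integer, α a rational number with denominator D, and t_k = (-1)^k ((α)_k / k!)^r where (α)_k is the rising factorial. Then for any positive integer m, there exist integers a_0, ..., a_{r-1} and a polynomial x ∈ ℤ[k] such that, for all integers k ≥ 0, (2Dk + Dα)^m · t_k = Σ_{i=0}^{r-1} a_i (2Dk + Dα)^i t_k + Δ_k( 2^{r-1} (Dk)^r x(2Dk) t_k ), where Δ_k f(k) = f(k+1) - f(k); moreover a_i = 0 whenever i ≢ m (mod 2). -/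
open Finset Polynomial

namespace Stmt9


noncomputable section

def Gp (r : ℕ) (c d : ℤ) (j : ℕ) : Polynomial ℤ :=
  (X + C c)^r * (X + C d)^j + (X - C c)^r * (X - C d)^j

def Sp (r : ℕ) (c d : ℤ) (x : Polynomial ℤ) : Polynomial ℤ :=
  (X + C c)^r * x.comp (X + C (2*d - c)) + (X - C c)^r * x.comp (X - C c)

lemma Sp_zero (r : ℕ) (c d : ℤ) : Sp r c d 0 = 0 := by simp [Sp]

lemma Sp_add (r : ℕ) (c d : ℤ) (x₁ x₂ : Polynomial ℤ) :
    Sp r c d (x₁ + x₂) = Sp r c d x₁ + Sp r c d x₂ := by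
  simp [Sp, add_comp]; ring

lemma Sp_CZ (r : ℕ) (c d : ℤ) (β : ℤ) (j : ℕ) :
    Sp r c d (C β * (X - C (d - c))^j) = C β * Gp r c d j := by
  have h1 : ((X : Polynomial ℤ) - C (d - c)).comp (X + C (2*d - c)) = X + C d := by
    simp only [sub_comp, add_comp, X_comp, C_comp]
    rw [add_sub_assoc, ← C_sub, show 2*d - c - (d - c) = d by ring]
  have h2 : ((X : Polynomial ℤ) - C (d - c)).comp (X - C c) = X - C d := by
    simp only [sub_comp, X_comp, C_comp]
    rw [sub_sub, ← C_add, show c + (d - c) = d by ring]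
  simp only [Sp, Gp, mul_comp, pow_comp, C_comp, h1, h2]
  ring

lemma neg_one_pow_C (n : ℕ) : ((-1 : Polynomial ℤ))^n = C ((-1)^n) := by simp

lemma coeff_comp_neg_X (p : Polynomial ℤ) (i : ℕ) :
    (p.comp (-X)).coeff i = (-1)^i * p.coeff i := by
  induction p using Polynomial.induction_on' with
  | add p q hp hq => simp [add_comp, hp, hq]; ring
  | monomial n a =>
    rw [monomial_comp, neg_pow, neg_one_pow_C, coeff_monomial]
    rw [show C a * (C ((-1:ℤ)^n) * X^n) = C (a * (-1)^n) * X^n by rw [C_mul]; ring]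
    rw [coeff_C_mul, coeff_X_pow]
    by_cases h : i = n
    · subst h; simp; ring
    · simp [h, Ne.symm h]

lemma Gp_comp_neg (r : ℕ) (c d : ℤ) (j : ℕ) :
    (Gp r c d j).comp (-X) = (-1)^(r+j) * Gp r c d j := by
  simp only [Gp, add_comp, mul_comp, pow_comp, X_comp, C_comp, sub_comp]
  have e1 : (-(X : Polynomial ℤ) + C c) = (-1) * (X - C c) := by ring
  have e2 : (-(X : Polynomial ℤ) + C d) = (-1) * (X - C d) := by ring
  have e3 : (-(X : Polynomial ℤ) - C c) = (-1) * (X + C c) := by ring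
  have e4 : (-(X : Polynomial ℤ) - C d) = (-1) * (X + C d) := by ring
  rw [e1, e2, e3, e4, mul_pow, mul_pow, mul_pow, mul_pow]
  ring

lemma Gp_coeff_parity (r : ℕ) (c d : ℤ) (j i : ℕ) (h : i % 2 ≠ (r + j) % 2) :
    (Gp r c d j).coeff i = 0 := by
  have h1 := coeff_comp_neg_X (Gp r c d j) i
  rw [Gp_comp_neg, neg_one_pow_C, coeff_C_mul] at h1
  have hne : (-1:ℤ)^(r+j) ≠ (-1)^i := by
    rcases Nat.even_or_odd i with hi | hi <;> rcases Nat.even_or_odd (r+j) with hj | hj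
    · rw [Nat.even_iff] at hi hj; omega
    · rw [hj.neg_one_pow, hi.neg_one_pow]; decide
    · rw [hj.neg_one_pow, hi.neg_one_pow]; decide
    · rw [Nat.odd_iff] at hi hj; omega
  have h2 : ((-1:ℤ)^(r+j) - (-1)^i) * (Gp r c d j).coeff i = 0 := by linear_combination h1
  rcases mul_eq_zero.mp h2 with h3 | h3
  · exact absurd (by linarith : (-1:ℤ)^(r+j) = (-1)^i) hne
  · exact h3

lemma natDeg1 (r : ℕ) (c d : ℤ) (j : ℕ) : ((X + C c)^r * (X + C d)^j).natDegree = r + j := by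
  rw [Monic.natDegree_mul ((monic_X_add_C c).pow r) ((monic_X_add_C d).pow j)]
  rw [natDegree_pow, natDegree_pow, natDegree_X_add_C, natDegree_X_add_C]; ring

lemma natDeg2 (r : ℕ) (c d : ℤ) (j : ℕ) : ((X - C c)^r * (X - C d)^j).natDegree = r + j := by
  rw [Monic.natDegree_mul ((monic_X_sub_C c).pow r) ((monic_X_sub_C d).pow j)]
  rw [natDegree_pow, natDegree_pow, natDegree_X_sub_C, natDegree_X_sub_C]; ring

lemma Gp_natDegree_le (r : ℕ) (c d : ℤ) (j : ℕ) : (Gp r c d j).natDegree ≤ r + j := by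
  refine le_trans (natDegree_add_le _ _) ?_
  rw [natDeg1, natDeg2]; simp

lemma Gp_coeff_top (r : ℕ) (c d : ℤ) (j : ℕ) : (Gp r c d j).coeff (r + j) = 2 := by
  have c1 : ((X + C c)^r * (X + C d)^j).coeff (r+j) = 1 := by
    have := (((monic_X_add_C c).pow r).mul ((monic_X_add_C d).pow j)).leadingCoeff
    rwa [leadingCoeff, natDeg1] at this
  have c2 : ((X - C c)^r * (X - C d)^j).coeff (r+j) = 1 := by
    have := (((monic_X_sub_C c).pow r).mul ((monic_X_sub_C d).pow j)).leadingCoeff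
    rwa [leadingCoeff, natDeg2] at this
  simp only [Gp, coeff_add]
  rw [c1, c2]; norm_num

lemma Gp_dvd (r : ℕ) (c d : ℤ) (j : ℕ) : C 2 ∣ Gp r c d j := by
  rw [Polynomial.C_dvd_iff_dvd_coeff]
  intro i
  have hmap : (Gp r c d j).map (Int.castRingHom (ZMod 2)) = 0 := by
    have hs : ∀ a : ℤ, ((X : Polynomial (ZMod 2)) - C (a : ZMod 2)) = X + C (a : ZMod 2) := by
      intro a; rw [CharTwo.sub_eq_add]
    simp only [Gp, Polynomial.map_add, Polynomial.map_mul, Polynomial.map_pow,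
      Polynomial.map_sub, Polynomial.map_X, Polynomial.map_C]
    rw [show (Int.castRingHom (ZMod 2)) c = ((c : ZMod 2)) from rfl,
       show (Int.castRingHom (ZMod 2)) d = ((d : ZMod 2)) from rfl, hs c, hs d]
    exact CharTwo.add_self_eq_zero _
  have h := congrArg (fun p => Polynomial.coeff p i) hmap
  simp only [Polynomial.coeff_map, Polynomial.coeff_zero] at h
  exact (ZMod.intCast_zmod_eq_zero_iff_dvd _ 2).mp h

end


lemma engine_base (r : ℕ) (c d : ℤ) (m : ℕ) (p : Polynomial ℤ) (hdeg : p.natDegree < r)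
    (hpar : ∀ i, i % 2 ≠ m % 2 → p.coeff i = 0) :
    ∃ (a : ℕ → ℤ) (x y : Polynomial ℤ),
      C 2 * y = Sp r c d x ∧
      p = (∑ i ∈ Finset.range r, C (a i) * X^i) - y ∧
      (∀ i, i % 2 ≠ m % 2 → a i = 0) := by
  refine ⟨fun i => p.coeff i, 0, 0, by simp [Sp_zero], ?_, hpar⟩
  rw [sub_zero]
  conv_lhs => rw [p.as_sum_range' r hdeg]
  exact Finset.sum_congr rfl fun i _ => (C_mul_X_pow_eq_monomial).symm

lemma engine (r : ℕ) (hr : 0 < r) (c d : ℤ) (m : ℕ) :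
    ∀ n : ℕ, ∀ p : Polynomial ℤ, p.natDegree ≤ n →
      (∀ i, i % 2 ≠ m % 2 → p.coeff i = 0) →
      ∃ (a : ℕ → ℤ) (x y : Polynomial ℤ),
        C 2 * y = Sp r c d x ∧
        p = (∑ i ∈ Finset.range r, C (a i) * X^i) - y ∧
        (∀ i, i % 2 ≠ m % 2 → a i = 0) := by
  intro n
  induction n with
  | zero =>
    intro p hdeg hpar
    exact engine_base r c d m p (by omega) hpar
  | succ n ih =>
    intro p hdeg hpar
    by_cases hlt : p.natDegree < r
    · exact engine_base r c d m p hlt hpar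
    push_neg at hlt
    have hp0 : p ≠ 0 := by
      intro h; rw [h, natDegree_zero] at hlt; omega
    have hβ : p.coeff p.natDegree ≠ 0 := by
      rw [← leadingCoeff]; exact leadingCoeff_ne_zero.mpr hp0
    set N := p.natDegree with hN
    set β := p.coeff N with hβdef
    have hparN : N % 2 = m % 2 := by
      by_contra h; exact hβ (hpar N h)
    set j := N - r with hj
    have hrj : r + j = N := by omega
    obtain ⟨g, hg⟩ := Gp_dvd r c d j
    set y0 : Polynomial ℤ := C (-β) * g with hy0
    have hy0eq : C 2 * y0 = C (-β) * Gp r c d j := by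
      rw [hy0, hg]; ring
    have hy0coeff : ∀ i, 2 * y0.coeff i = -β * (Gp r c d j).coeff i := by
      intro i
      have h := congrArg (fun q => q.coeff i) hy0eq
      simpa [coeff_C_mul] using h
    have hy0top : y0.coeff N = -β := by
      have h := hy0coeff N
      rw [← hrj, Gp_coeff_top] at h
      rw [← hrj]
      omega
    have hy0par : ∀ i, i % 2 ≠ m % 2 → y0.coeff i = 0 := by
      intro i hi
      have hG : (Gp r c d j).coeff i = 0 := Gp_coeff_parity r c d j i (by omega)
      have h := hy0coeff i; rw [hG] at h; omega
    have hy0hi : ∀ i, N < i → y0.coeff i = 0 := by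
      intro i hiN
      have hG : (Gp r c d j).coeff i = 0 :=
        coeff_eq_zero_of_natDegree_lt (lt_of_le_of_lt (Gp_natDegree_le r c d j) (by omega))
      have h := hy0coeff i; rw [hG] at h; omega
    have hp'deg : (p + y0).natDegree ≤ n := by
      have h1 : (p + y0).natDegree ≤ N - 1 := by
        rw [natDegree_le_iff_coeff_eq_zero]
        intro i hi
        rcases eq_or_lt_of_le (show N ≤ i by omega) with h | h
        · rw [coeff_add, ← h, hy0top, ← hβdef]; ring
        · rw [coeff_add, coeff_eq_zero_of_natDegree_lt h, hy0hi i h]; ring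
      omega
    have hp'par : ∀ i, i % 2 ≠ m % 2 → (p + y0).coeff i = 0 := by
      intro i hi; rw [coeff_add, hpar i hi, hy0par i hi]; ring
    obtain ⟨a, x', y', hxy, hdecomp, hapar⟩ := ih (p + y0) hp'deg hp'par
    refine ⟨a, x' + C (-β) * (X - C (d - c))^j, y' + y0, ?_, ?_, hapar⟩
    · rw [Sp_add, ← hxy, Sp_CZ, mul_add, hy0eq]
    · have hpp : p = (p + y0) - y0 := by ring
      rw [hpp, hdecomp]; ring

lemma Sp_def (r : ℕ) (c d : ℤ) (x : Polynomial ℤ) : Sp r c d x =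
    (X + C c)^r * x.comp (X + C (2*d - c)) + (X - C c)^r * x.comp (X - C c) := rfl



lemma tfact (r : ℕ) (α : ℚ) (t : ℕ → ℚ)
    (ht : ∀ k : ℕ, t k =
      (-1) ^ k * ((∏ i ∈ Finset.range k, (α + i)) / (Nat.factorial k)) ^ r)
    (k : ℕ) : ((k:ℚ)+1)^r * t (k+1) = -((α + k)^r * t k) := by
  rw [ht, ht, prod_range_succ, Nat.factorial_succ]
  have h1 : ((Nat.factorial k : ℚ)) ≠ 0 := Nat.cast_ne_zero.mpr (Nat.factorial_ne_zero k)
  have h2 : ((k:ℚ)+1) ≠ 0 := by positivity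
  push_cast
  rw [pow_succ, div_pow, div_pow, mul_pow, mul_pow]
  have h3 : ((k:ℚ)+1)^r ≠ 0 := pow_ne_zero _ h2
  have h4 : ((Nat.factorial k : ℚ))^r ≠ 0 := pow_ne_zero _ h1
  field_simp


end Stmt9

open Stmt9 in
/-- for t_k = (-1)^k ((α)_k/k!)^r with α of denominator D, any power
(2Dk+Dα)^m reduces, modulo a forward difference of the form Δ_k(2^{r-1}(Dk)^r x(2Dk) t_k),
to an integral combination of (2Dk+Dα)^i, 0 ≤ i < r, with only powers of the parity of m. -/
theorem stmt9 (r : ℕ) (hr : 0 < r) (α : ℚ) (D : ℕ) (hD : D = α.den)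
    (t : ℕ → ℚ)
    (ht : ∀ k : ℕ, t k =
      (-1) ^ k * ((∏ i ∈ Finset.range k, (α + i)) / (Nat.factorial k)) ^ r)
    (m : ℕ) (hm : 0 < m) :
    ∃ (a : ℕ → ℤ) (x : Polynomial ℤ),
      (∀ k : ℕ,
        (2 * D * k + D * α) ^ m * t k
          = (∑ i ∈ Finset.range r, (a i : ℚ) * (2 * D * k + D * α) ^ i * t k)
            + ((2 : ℚ) ^ (r - 1) * (D * (k + 1)) ^ r
                * ((x.eval (2 * (D : ℤ) * (k + 1)) : ℤ) : ℚ) * t (k + 1)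
              - (2 : ℚ) ^ (r - 1) * (D * k) ^ r
                * ((x.eval (2 * (D : ℤ) * k) : ℤ) : ℚ) * t k)) ∧
      (∀ i : ℕ, i < r → ¬ (i % 2 = m % 2) → a i = 0) := by
  obtain ⟨s, rfl⟩ : ∃ s, r = s + 1 := ⟨r - 1, by omega⟩
  obtain ⟨a, x, y, hxy, hdecomp, hapar⟩ :=
    engine (s+1) hr α.num (D : ℤ) m m (X ^ m) (by simp [natDegree_X_pow]) (by
      intro i hi
      rw [coeff_X_pow]
      simp [show ¬ i = m by omega])
  refine ⟨a, x, ?_, fun i _ hi => hapar i hi⟩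
  intro k
  have hc : (α.num : ℚ) = (D:ℚ) * α := by
    rw [hD, ← Rat.mul_den_eq_num]; ring
  have hT := tfact (s+1) α t ht k
  set u : ℤ := 2 * (D:ℤ) * k + α.num with hu
  have e1 := congrArg (Polynomial.eval u) hdecomp
  simp only [eval_pow, eval_X, eval_sub, eval_finset_sum, eval_mul, eval_C] at e1
  have e2 := congrArg (Polynomial.eval u) hxy
  rw [Sp_def] at e2
  simp only [eval_mul, eval_C, eval_add, eval_pow, eval_comp, eval_X, eval_sub] at e2
  have hub : u + (2 * (D:ℤ) - α.num) = 2 * (D:ℤ) * ((k:ℤ)+1) := by rw [hu]; ring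
  have huc : u - α.num = 2 * (D:ℤ) * (k:ℤ) := by rw [hu]; ring
  rw [hub, huc] at e2
  -- cast to ℚ
  have e1Q : ((u:ℚ))^m = (∑ i ∈ Finset.range (s+1), (a i : ℚ) * (u:ℚ)^i) - ((y.eval u : ℤ):ℚ) := by
    exact_mod_cast congrArg (fun z : ℤ => (z : ℚ)) e1
  have e2Q : 2 * ((y.eval u : ℤ):ℚ)
      = ((u:ℚ) + (α.num:ℚ))^(s+1) * ((x.eval (2*(D:ℤ)*((k:ℤ)+1)) : ℤ):ℚ)
        + ((2*(D:ℚ)*(k:ℚ)))^(s+1) * ((x.eval (2*(D:ℤ)*(k:ℤ)) : ℤ):ℚ) := by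
    exact_mod_cast congrArg (fun z : ℤ => (z : ℚ)) e2
  have hUu : ((u:ℤ):ℚ) = 2 * (D:ℚ) * k + (D:ℚ) * α := by
    rw [hu]; push_cast [hc]; ring
  rw [hUu] at e1Q e2Q
  rw [hc] at e2Q
  simp only [Nat.add_sub_cancel]
  have hsum : (∑ i ∈ Finset.range (s+1), (a i : ℚ) * (2*(D:ℚ)*k + (D:ℚ)*α)^i * t k)
      = (∑ i ∈ Finset.range (s+1), (a i : ℚ) * (2*(D:ℚ)*k + (D:ℚ)*α)^i) * t k := by
    rw [Finset.sum_mul]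
  rw [hsum]
  have f1 : (2*(D:ℚ)*(k:ℚ) + (D:ℚ)*α + (D:ℚ)*α)^(s+1) = 2^(s+1) * ((D:ℚ)*(α+(k:ℚ)))^(s+1) := by
    rw [show (2*(D:ℚ)*(k:ℚ) + (D:ℚ)*α + (D:ℚ)*α) = 2*((D:ℚ)*(α+(k:ℚ))) by ring, mul_pow]
  have f2 : (2*(D:ℚ)*(k:ℚ))^(s+1) = 2^(s+1) * ((D:ℚ)*(k:ℚ))^(s+1) := by
    rw [show (2*(D:ℚ)*(k:ℚ)) = 2*((D:ℚ)*(k:ℚ)) by ring, mul_pow]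
  rw [f1, f2] at e2Q
  have hT2 : ((D:ℚ)*((k:ℚ)+1))^(s+1) * t (k+1) = -(((D:ℚ)*(α+(k:ℚ)))^(s+1) * t k) := by
    rw [mul_pow, mul_pow]
    linear_combination (D:ℚ)^(s+1) * hT
  linear_combination (t k) * e1Q
    - ((2:ℚ)^s * ((x.eval (2*(D:ℤ)*((k:ℤ)+1)) : ℤ):ℚ)) * hT2
    - (t k)/2 * e2Q
end

section
/- Let p ≥ 5 be prime and ω = (p+1)/2. Then ((1/2)_ω / (1)_ω)^3 ≡ p^3 · (-1)^{(p-1)/2} (mod p^4), where the left side is viewed as a p-adic integer (it equals p^3 times a p-adic unit). -/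
/-!
Writing `p = 2m + 1`, the ratio `(1/2)_{m+1} / (m+1)!` is `C(m+1) / 4^(m+1)` with `C` the
central binomial coefficient, and `(m+1) C(m+1) = 2p C(m)` turns it into `p · C(m) / ((p+1) 4^m)`.
Modulo `p` we have `C(m) = (p-1).choose m ≡ (-1)^m`, `p + 1 ≡ 1` and `4^m = 2^(p-1) ≡ 1`, so the
cube is `p^3 (-1)^(3m) = p^3 (-1)^m` plus `p^3` times a fraction whose numerator is divisible by
`p` and whose denominator `((p+1) 4^m)^3` is prime to `p`.
-/

open Finset Nat

theorem centralBinom_succ_div_four_pow {K : Type*} [Field K] [CharZero K] (n : ℕ) :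
    (centralBinom (n + 1) : K) / 4 ^ (n + 1) =
      (2 * n + 1) * centralBinom n / ((2 * n + 2) * 4 ^ n) := by
  have h := congrArg (Nat.cast : ℕ → K) (succ_mul_centralBinom_succ n)
  push_cast at h
  field_simp
  linear_combination 2 * 4 ^ n * h

theorem prod_range_half_add_div_factorial {K : Type*} [Field K] [CharZero K] (n : ℕ) :
    (∏ i ∈ range n, ((1 : K) / 2 + i)) / n ! = centralBinom n / 4 ^ n := by
  induction n with
  | zero => simp
  | succ n ih =>
    rw [centralBinom_succ_div_four_pow, prod_range_succ, factorial_succ]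
    calc (∏ i ∈ range n, ((1 : K) / 2 + i)) * (1 / 2 + n) / ↑((n + 1) * n !)
        = (∏ i ∈ range n, ((1 : K) / 2 + i)) / n ! * ((2 * n + 1) / (2 * n + 2)) := by
          push_cast
          field_simp
          ring
      _ = _ := by
          rw [ih]
          field_simp

theorem ZMod.natCast_choose_sub_one {p : ℕ} [Fact p.Prime] {k : ℕ} (hk : k ≤ p - 1) :
    ((p - 1).choose k : ZMod p) = (-1) ^ k := by
  induction k with
  | zero => simp
  | succ k ih =>
    have hp : p.Prime := Fact.out
    have hpascal := choose_succ_succ' (p - 1) k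
    rw [Nat.sub_add_cancel hp.one_lt.le] at hpascal
    have hdvd : ((p.choose (k + 1) : ℕ) : ZMod p) = 0 :=
      (ZMod.natCast_eq_zero_iff _ _).mpr (hp.dvd_choose_self (by omega) (by omega))
    rw [hpascal, Nat.cast_add, ih (by omega)] at hdvd
    linear_combination hdvd

theorem ZMod.natCast_centralBinom_of_eq_two_mul_add_one {p m : ℕ} [Fact p.Prime]
    (hm : p = 2 * m + 1) :
    (centralBinom m : ZMod p) = (-1) ^ m := by
  rw [centralBinom_eq_two_mul_choose, show 2 * m = p - 1 by omega]
  exact ZMod.natCast_choose_sub_one (by omega)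

theorem ZMod.four_pow_of_eq_two_mul_add_one {p m : ℕ} [Fact p.Prime] (hm : p = 2 * m + 1) :
    (4 : ZMod p) ^ m = 1 := by
  have h2 : (2 : ZMod p) ≠ 0 := by
    have := (Fact.out : p.Prime).two_le
    intro h
    have := Nat.le_of_dvd two_pos ((ZMod.natCast_eq_zero_iff 2 p).mp (by exact_mod_cast h))
    omega
  rw [show (4 : ZMod p) = 2 ^ 2 by norm_num, ← pow_mul, show 2 * m = p - 1 by omega]
  exact ZMod.pow_card_sub_one_eq_one h2

theorem div_eq_zero_or_le_padicValRat {p : ℕ} [Fact p.Prime] {a b : ℤ} {n : ℕ}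
    (ha : (p : ℤ) ^ n ∣ a) (hb : ¬ (p : ℤ) ∣ b) :
    (a / b : ℚ) = 0 ∨ (n : ℤ) ≤ padicValRat p (a / b) := by
  rcases eq_or_ne a 0 with rfl | ha0
  · simp
  have hb0 : b ≠ 0 := by rintro rfl; exact hb (dvd_zero _)
  right
  rw [padicValRat.div (by exact_mod_cast ha0) (by exact_mod_cast hb0), padicValRat.of_int,
    padicValRat.of_int, padicValInt.eq_zero_of_not_dvd hb, Nat.cast_zero, sub_zero]
  exact_mod_cast ((padicValInt_dvd_iff n a).mp ha).resolve_left ha0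

/-- for p ≥ 5 prime and ω = (p+1)/2,
((1/2)_ω/(1)_ω)^3 ≡ p^3 (-1)^{(p-1)/2} (mod p^4) in the p-adic sense. -/
theorem stmt10 (p : ℕ) (hp : p.Prime) (hp5 : 5 ≤ p) (ω : ℕ) (hω : ω = (p + 1) / 2)
    (lhs rhs : ℚ)
    (hlhs : lhs = ((∏ i ∈ Finset.range ω, ((1 : ℚ) / 2 + i)) / (Nat.factorial ω)) ^ 3)
    (hrhs : rhs = (p : ℚ) ^ 3 * (-1) ^ ((p - 1) / 2)) :
    lhs = rhs ∨ (4 : ℤ) ≤ padicValRat p (lhs - rhs) := by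
  have := Fact.mk hp
  obtain ⟨m, hm⟩ : ∃ m, p = 2 * m + 1 := hp.eq_two_or_odd'.resolve_left (by omega)
  obtain rfl : ω = m + 1 := by omega
  set u : ℤ := (p + 1) * 4 ^ m
  set N : ℤ := centralBinom m ^ 3 - (-1) ^ m * u ^ 3
  have hu : (u : ZMod p) = 1 := by simp [u, ZMod.four_pow_of_eq_two_mul_add_one hm]
  have hN : (p : ℤ) ∣ N := by
    rw [← ZMod.intCast_zmod_eq_zero_iff_dvd]
    simp only [N, Int.cast_sub, Int.cast_mul, Int.cast_pow, hu, Int.cast_natCast,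
      ZMod.natCast_centralBinom_of_eq_two_mul_add_one hm]
    rcases neg_one_pow_eq_or (ZMod p) m with h | h <;> norm_num [h]
  have hdiff : lhs - rhs = ((p ^ 3 * N : ℤ) : ℚ) / (u ^ 3 : ℤ) := by
    rw [hlhs, hrhs, prod_range_half_add_div_factorial, centralBinom_succ_div_four_pow,
      show (p - 1) / 2 = m by omega, hm]
    push_cast [u, N, hm]
    field_simp
    ring
  rw [← sub_eq_zero, hdiff]
  refine div_eq_zero_or_le_padicValRat (by rw [pow_succ]; exact mul_dvd_mul_left _ hN) ?_
  rw [← ZMod.intCast_zmod_eq_zero_iff_dvd, Int.cast_pow, hu]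
  simp
end

section
/- Let p ≥ 5 be prime. The quantity (1/(p+1)) · ∏_{i=1}^{(p-1)/2} (2i-1)/(2i) is a p-adic integer congruent to (-1)^{(p-1)/2} modulo p. -/
/-- for p ≥ 5 prime, (1/(p+1)) ∏_{i=1}^{(p-1)/2} (2i-1)/(2i) is a
p-adic integer congruent to (-1)^{(p-1)/2} modulo p. -/
theorem stmt11 (p : ℕ) (hp : p.Prime) (hp5 : 5 ≤ p) (x e : ℚ)
    (hx : x = (1 / ((p : ℚ) + 1)) *
      ∏ i ∈ Finset.Icc 1 ((p - 1) / 2), ((2 * (i : ℚ) - 1) / (2 * i)))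
    (he : e = (-1 : ℚ) ^ ((p - 1) / 2)) :
    (0 : ℤ) ≤ padicValRat p x ∧ (x = e ∨ (1 : ℤ) ≤ padicValRat p (x - e)) := by
  have hfact : Fact p.Prime := ⟨hp⟩
  set m := (p - 1) / 2 with hmdef
  have hodd : p % 2 = 1 := Nat.odd_iff.mp (hp.odd_of_ne_two (by omega))
  have hpm : p = 2 * m + 1 := by omega
  set A : ℤ := ∏ i ∈ Finset.Icc 1 m, (2 * (i : ℤ) - 1) with hA
  set C : ℤ := ∏ i ∈ Finset.Icc 1 m, (2 * (i : ℤ)) with hC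
  set B : ℤ := ((p : ℤ) + 1) * C with hB
  set ε : ℤ := (-1) ^ m with hε
  have hppos : (0:ℤ) < p := by exact_mod_cast hp.pos
  have hpZ : Prime (p : ℤ) := Nat.prime_iff_prime_int.mp hp
  -- positivity
  have hApos : 0 < A := Finset.prod_pos (fun i hi => by
    simp only [Finset.mem_Icc] at hi; omega)
  have hCpos : 0 < C := Finset.prod_pos (fun i hi => by
    simp only [Finset.mem_Icc] at hi; omega)
  have hBpos : 0 < B := mul_pos (by omega) hCpos
  -- non-divisibility
  have hdA : ¬ (p:ℤ) ∣ A := by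
    rw [hA, Prime.dvd_finset_prod_iff hpZ]
    rintro ⟨i, hi, hdvd⟩
    simp only [Finset.mem_Icc] at hi
    have := Int.le_of_dvd (by omega) hdvd
    omega
  have hdC : ¬ (p:ℤ) ∣ C := by
    rw [hC, Prime.dvd_finset_prod_iff hpZ]
    rintro ⟨i, hi, hdvd⟩
    simp only [Finset.mem_Icc] at hi
    have := Int.le_of_dvd (by omega) hdvd
    omega
  have hdB : ¬ (p:ℤ) ∣ B := by
    rw [hB]
    intro h
    rcases hpZ.dvd_mul.mp h with h | h
    · have h1 : (p:ℤ) ∣ 1 := (dvd_add_right dvd_rfl).mp h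
      have := Int.le_of_dvd one_pos h1
      omega
    · exact hdC h
  -- reflection identity
  have hrefl : A = ∏ i ∈ Finset.Icc 1 m, ((p : ℤ) - 2 * i) := by
    rw [hA]
    refine Finset.prod_nbij' (fun a => m + 1 - a) (fun a => m + 1 - a) ?_ ?_ ?_ ?_ ?_
    all_goals intro a ha
    all_goals simp only [Finset.mem_Icc] at *
    · omega
    · omega
    · show m + 1 - (m + 1 - a) = a; omega
    · show m + 1 - (m + 1 - a) = a; omega
    · show (2 * (a : ℤ) - 1) = (p : ℤ) - 2 * ((m + 1 - a : ℕ) : ℤ)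
      have : ((m + 1 - a : ℕ) : ℤ) = (m : ℤ) + 1 - a := by omega
      rw [this]
      have : (p : ℤ) = 2 * m + 1 := by exact_mod_cast congrArg (Nat.cast : ℕ → ℤ) hpm
      rw [this]; ring
  -- key divisibility
  have hkey : (p:ℤ) ∣ (A - ε * B) := by
    rw [← ZMod.intCast_zmod_eq_zero_iff_dvd]
    push_cast
    have h1 : ((A : ℤ) : ZMod p) = (-1)^m * ((C : ℤ) : ZMod p) := by
      rw [hrefl, hC]
      push_cast
      rw [CharP.cast_eq_zero (ZMod p) p]
      rw [show (∏ i ∈ Finset.Icc 1 m, ((0:ZMod p) - 2 * (i:ℕ))) =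
        ∏ i ∈ Finset.Icc 1 m, ((-1) * (2 * (i:ℕ) : ZMod p)) from
        Finset.prod_congr rfl (fun i _ => by ring)]
      rw [Finset.prod_mul_distrib, Finset.prod_const, Nat.card_Icc]
      simp
    have h2 : ((B : ℤ) : ZMod p) = ((C : ℤ) : ZMod p) := by
      rw [hB]
      push_cast
      rw [CharP.cast_eq_zero (ZMod p) p]
      ring
    rw [h1, h2, hε]
    push_cast
    ring
  -- x = A / B
  have hxAB : x = (A : ℚ) / (B : ℚ) := by
    rw [hx, Finset.prod_div_distrib, div_mul_div_comm, one_mul, hA, hB, hC]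
    push_cast
    ring
  have hBQ : (B : ℚ) ≠ 0 := by exact_mod_cast hBpos.ne'
  have hAQ : (A : ℚ) ≠ 0 := by exact_mod_cast hApos.ne'
  have heε : e = ((ε : ℤ) : ℚ) := by rw [he, hε]; push_cast; rfl
  have hsub : x - e = ((A - ε * B : ℤ) : ℚ) / (B : ℚ) := by
    rw [hxAB, heε]
    push_cast
    field_simp
  constructor
  · rw [hxAB, padicValRat.div hAQ hBQ, padicValRat.of_int, padicValRat.of_int,
      padicValInt.eq_zero_of_not_dvd hdA, padicValInt.eq_zero_of_not_dvd hdB]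
    simp
  · by_cases hz : (A - ε * B : ℤ) = 0
    · left
      have : x - e = 0 := by rw [hsub, hz]; simp
      linarith [this]
    · right
      have hnum : ((A - ε * B : ℤ) : ℚ) ≠ 0 := by exact_mod_cast hz
      rw [hsub, padicValRat.div hnum hBQ, padicValRat.of_int, padicValRat.of_int,
        padicValInt.eq_zero_of_not_dvd hdB]
      simp only [Nat.cast_zero, sub_zero]
      have : (1:ℕ) ≤ padicValInt p (A - ε * B) := by
        rcases (padicValInt_dvd_iff 1 (A - ε * B)).mp (by simpa using hkey) with h | h
        · exact absurd h hz
        · exact h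
      exact_mod_cast this
end

section
/- Let t_k = ((1/2)_k/(1)_k)^4 and let m be a positive odd integer with μ = (m-1)/2. Then there exist an integer c and a polynomial x ∈ ℤ[k] such that for all integers k ≥ 0: μ! · (4k+1)^m t_k = c·(4k+1) t_k + Δ_k( 32 k^4 x(4k) t_k ), where Δ_k f(k) = f(k+1) - f(k). -/
/-!
Put `n = 4k + 1`. Since `16 (k+1)^4 t_{k+1} = (2k+1)^4 t_k`, the operator
`w ↦ (n+1)^4 w(n+2) - (n-1)^4 w(n-2)` on `ℤ[n]`, multiplied by `t_k`, is `256 Δ_k(k^4 x(4k) t_k)`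
with `x(y) = w(y - 1)`. It sends `n^(2j)` to `8` times an odd polynomial of degree `2j + 3` with
leading coefficient `j + 1`, so induction on the degree reduces every odd polynomial whose
`n^(2i+1)`-coefficient is divisible by `8 i!` to a multiple of `8n`; `8 μ! n^(2μ+1)` is one of them.
-/

open Polynomial
open scoped Nat

section OddPolynomial
variable {R : Type*} [CommRing R]

lemma coeff_comp_neg_X (p : R[X]) (n : ℕ) :
    (p.comp (-X)).coeff n = (-1) ^ n * p.coeff n := by
  rw [← neg_one_mul (X : R[X]), ← C_1, ← C_neg, comp_C_mul_X_coeff, mul_comm]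

variable [NoZeroDivisors R] [CharZero R] {p : R[X]}

lemma coeff_eq_zero_of_comp_neg_X_eq_neg (hp : p.comp (-X) = -p) {n : ℕ} (hn : Even n) :
    p.coeff n = 0 := by
  have h := coeff_comp_neg_X p n
  rwa [hp, hn.neg_one_pow, one_mul, coeff_neg, CharZero.neg_eq_self_iff] at h

lemma natDegree_le_of_comp_neg_X_eq_neg (hp : p.comp (-X) = -p) {N : ℕ}
    (hdeg : p.natDegree ≤ 2 * N + 3) (hc : p.coeff (2 * N + 3) = 0) :
    p.natDegree ≤ 2 * N + 1 := by
  rw [natDegree_le_iff_coeff_eq_zero]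
  intro n hn
  obtain rfl | rfl | hn' : n = 2 * N + 2 ∨ n = 2 * N + 3 ∨ 2 * N + 3 < n := by omega
  · exact coeff_eq_zero_of_comp_neg_X_eq_neg hp ⟨N + 1, by ring⟩
  · exact hc
  · exact coeff_eq_zero_of_natDegree_lt (hdeg.trans_lt hn')

lemma eq_C_mul_X_of_comp_neg_X_eq_neg (hp : p.comp (-X) = -p) (hdeg : p.natDegree ≤ 1) :
    p = C (p.coeff 1) * X := by
  conv_lhs => rw [eq_X_add_C_of_natDegree_le_one hdeg]
  rw [coeff_eq_zero_of_comp_neg_X_eq_neg hp Even.zero, C_0, add_zero]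

end OddPolynomial

noncomputable def deltaOp : ℤ[X] →+ ℤ[X] where
  toFun w := (X + 1) ^ 4 * w.comp (X + 2) - (X - 1) ^ 4 * w.comp (X - 2)
  map_zero' := by simp
  map_add' v w := by simp only [add_comp]; ring

lemma deltaOp_apply (w : ℤ[X]) :
    deltaOp w = (X + 1) ^ 4 * w.comp (X + 2) - (X - 1) ^ 4 * w.comp (X - 2) := rfl

lemma deltaOp_comp_neg_X (w : ℤ[X]) : (deltaOp w).comp (-X) = -deltaOp (w.comp (-X)) := by
  simp only [deltaOp_apply, sub_comp, mul_comp, comp_assoc, pow_comp, add_comp, X_comp, neg_comp,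
    one_comp, ofNat_comp, Nat.cast_ofNat, neg_add_rev, neg_sub]
  ring_nf

-- `(X + 2)^2 - (X - 2)^2 = 8X` drives the recursion.
noncomputable def deltaQuot : ℕ → ℤ[X]
  | 0 => X ^ 3 + X
  | j + 1 => (X + 2) ^ 2 * deltaQuot j + X * (X - 1) ^ 4 * (X - 2) ^ (2 * j)

lemma eight_mul_deltaQuot (j : ℕ) : 8 * deltaQuot j = deltaOp (X ^ (2 * j)) := by
  induction j with
  | zero => simp [deltaQuot, deltaOp_apply]; ring
  | succ j ih =>
    have h : deltaOp (X ^ (2 * (j + 1))) =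
        (X + 2) ^ 2 * deltaOp (X ^ (2 * j)) + 8 * (X * (X - 1) ^ 4 * (X - 2) ^ (2 * j)) := by
      simp only [deltaOp_apply, X_pow_comp]
      ring
    rw [h, ← ih, deltaQuot]
    ring

lemma deltaQuot_comp_neg_X (j : ℕ) : (deltaQuot j).comp (-X) = -deltaQuot j := by
  refine mul_left_cancel₀ (by norm_num : (8 : ℤ[X]) ≠ 0) ?_
  rw [show (8 : ℤ[X]) * (deltaQuot j).comp (-X) = (8 * deltaQuot j).comp (-X) by simp [mul_comp],
    mul_neg, eight_mul_deltaQuot, deltaOp_comp_neg_X, X_pow_comp, (even_two_mul j).neg_pow]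

lemma natDegree_deltaQuot_le (j : ℕ) : (deltaQuot j).natDegree ≤ 2 * j + 3 := by
  induction j with
  | zero => rw [deltaQuot]; compute_degree!
  | succ j ih =>
    rw [deltaQuot]
    have hsq : ((X + 2) ^ 2 : ℤ[X]).natDegree ≤ 2 := by compute_degree!
    refine natDegree_add_le_of_degree_le ((natDegree_mul_le_of_le hsq ih).trans (by omega)) ?_
    compute_degree!
    omega

lemma coeff_deltaQuot (j : ℕ) : (deltaQuot j).coeff (2 * j + 3) = j + 1 := by
  induction j with
  | zero => simp [deltaQuot, coeff_X]
  | succ j ih =>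
    have hsq : ((X + 2) ^ 2 : ℤ[X]).coeff 2 = 1 := by
      have : (X + 2 : ℤ[X]) ^ 2 = X ^ 2 + C 4 * X + C 4 := by simp only [map_ofNat]; ring
      simp [this, coeff_X]
    have hM : (X * (X - 1) ^ 4 * (X - 2) ^ (2 * j) : ℤ[X]).coeff (2 * (j + 1) + 3) = 1 := by
      have hmon : (X * (X - 1) ^ 4 * (X - 2) ^ (2 * j) : ℤ[X]).Monic := by monicity!
      have hdeg : (X * (X - 1) ^ 4 * (X - 2) ^ (2 * j) : ℤ[X]).natDegree = 2 * (j + 1) + 3 := by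
        compute_degree! <;> omega
      rw [← hdeg, hmon.coeff_natDegree]
    rw [deltaQuot, coeff_add, hM, show 2 * (j + 1) + 3 = 2 + (2 * j + 3) by ring,
      coeff_mul_add_eq_of_natDegree_le (by compute_degree!) (natDegree_deltaQuot_le j), hsq, ih]
    push_cast; ring

noncomputable def deltaSpan : AddSubgroup ℤ[X] :=
  AddSubgroup.zmultiples (8 * X) ⊔ deltaOp.range

lemma mem_deltaSpan_of_comp_neg_X_eq_neg (N : ℕ) {T : ℤ[X]} (hT : T.comp (-X) = -T)
    (hdeg : T.natDegree ≤ 2 * N + 1) (hdvd : ∀ i ≤ N, (8 * i ! : ℤ) ∣ T.coeff (2 * i + 1)) :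
    T ∈ deltaSpan := by
  induction N generalizing T with
  | zero =>
    obtain ⟨c, hc⟩ := hdvd 0 le_rfl
    refine AddSubgroup.mem_sup_left (AddSubgroup.mem_zmultiples_iff.mpr ⟨c, ?_⟩)
    rw [eq_C_mul_X_of_comp_neg_X_eq_neg hT hdeg, hc, smul_eq_C_mul]
    simp only [Nat.factorial_zero, Nat.cast_one, mul_one, map_mul, map_ofNat]
    ring
  | succ N ih =>
    obtain ⟨b, hb⟩ := hdvd (N + 1) le_rfl
    set w : ℤ[X] := (b * N ! : ℤ) • X ^ (2 * N)
    have hw : deltaOp w = (8 * b * N ! : ℤ) • deltaQuot N := by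
      rw [map_zsmul, ← eight_mul_deltaQuot, smul_eq_C_mul, smul_eq_C_mul]
      simp only [map_mul, map_ofNat, map_natCast]
      ring
    have hodd : (T - deltaOp w).comp (-X) = -(T - deltaOp w) := by
      rw [hw, sub_comp, smul_comp, deltaQuot_comp_neg_X, hT, smul_neg, neg_sub_neg, neg_sub]
    rw [← sub_add_cancel T (deltaOp w)]
    refine add_mem (ih hodd ?_ fun i hi => ?_) (AddSubgroup.mem_sup_right ⟨w, rfl⟩)
    · refine natDegree_le_of_comp_neg_X_eq_neg hodd ?_ ?_
      · rw [hw]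
        have hq := (natDegree_smul_le (8 * b * N ! : ℤ) _).trans (natDegree_deltaQuot_le N)
        exact (natDegree_sub_le_of_le hdeg hq).trans (by omega)
      · rw [hw, coeff_sub, coeff_smul, coeff_deltaQuot, show 2 * N + 3 = 2 * (N + 1) + 1 by ring,
          hb, Nat.factorial_succ]
        push_cast
        ring
    · rw [hw, coeff_sub, coeff_smul, smul_eq_mul]
      refine dvd_sub (hdvd i (by omega)) (Dvd.dvd.mul_right ?_ _)
      exact (mul_dvd_mul_left 8 (Int.natCast_dvd_natCast.mpr (Nat.factorial_dvd_factorial hi))).trans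
        ⟨b, by ring⟩

lemma eval_deltaOp (w : ℤ[X]) (n : ℤ) :
    (deltaOp w).eval n = (n + 1) ^ 4 * w.eval (n + 2) - (n - 1) ^ 4 * w.eval (n - 2) := by
  simp [deltaOp_apply]

lemma exists_telescoping_of_mem_deltaSpan {K : Type*} [CommRing K] {T : ℤ[X]}
    (hT : T ∈ deltaSpan) {t : ℕ → K}
    (ht : ∀ k : ℕ, 16 * ((k : K) + 1) ^ 4 * t (k + 1) = (2 * k + 1) ^ 4 * t k) :
    ∃ (c : ℤ) (x : ℤ[X]), ∀ k : ℕ,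
      ((T.eval (4 * (k : ℤ) + 1) : ℤ) : K) * t k = 8 * c * (4 * k + 1) * t k
        + 256 * (((k : K) + 1) ^ 4 * ((x.eval (4 * ((k : ℤ) + 1)) : ℤ) : K) * t (k + 1)
          - (k : K) ^ 4 * ((x.eval (4 * (k : ℤ)) : ℤ) : K) * t k) := by
  obtain ⟨_, hy, _, ⟨w, rfl⟩, rfl⟩ := AddSubgroup.mem_sup.mp hT
  obtain ⟨c, rfl⟩ := AddSubgroup.mem_zmultiples_iff.mp hy
  refine ⟨c, w.comp (X - 1), fun k => ?_⟩
  have hx₁ : (w.comp (X - 1)).eval (4 * ((k : ℤ) + 1)) = w.eval (4 * (k : ℤ) + 1 + 2) := by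
    simp only [eval_comp, eval_sub, eval_X, eval_one]; ring_nf
  have hx₀ : (w.comp (X - 1)).eval (4 * (k : ℤ)) = w.eval (4 * (k : ℤ) + 1 - 2) := by
    simp only [eval_comp, eval_sub, eval_X, eval_one]; ring_nf
  rw [hx₁, hx₀, eval_add, eval_deltaOp, eval_smul, smul_eq_mul, eval_mul, eval_X, eval_ofNat]
  push_cast
  linear_combination (-16 * ((w.eval (4 * (k : ℤ) + 1 + 2) : ℤ) : K)) * ht k

lemma eight_mul_factorial_smul_X_pow_mem_deltaSpan (μ : ℕ) :
    (8 * μ ! : ℤ) • (X : ℤ[X]) ^ (2 * μ + 1) ∈ deltaSpan := by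
  refine mem_deltaSpan_of_comp_neg_X_eq_neg μ ?_ ?_ fun i hi => ?_
  · rw [smul_comp, X_pow_comp, Odd.neg_pow ⟨μ, rfl⟩, smul_neg]
  · exact (natDegree_smul_le _ _).trans (natDegree_X_pow_le _)
  · rw [coeff_smul, coeff_X_pow, smul_eq_mul]
    obtain rfl | hne := eq_or_ne i μ
    · simp
    · simp [hne]

lemma sixteen_mul_succ_pow_four_mul_term_succ (t : ℕ → ℚ)
    (ht : ∀ k : ℕ, t k =
      ((∏ i ∈ Finset.range k, ((1 : ℚ) / 2 + i)) / (Nat.factorial k)) ^ 4) (k : ℕ) :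
    16 * ((k : ℚ) + 1) ^ 4 * t (k + 1) = (2 * k + 1) ^ 4 * t k := by
  rw [ht, ht, Finset.prod_range_succ, Nat.factorial_succ]
  push_cast
  field_simp
  ring

theorem stmt16_general (m : ℕ) (hm : Odd m) (μ : ℕ) (hμ : μ = (m - 1) / 2)
    (t : ℕ → ℚ)
    (ht : ∀ k : ℕ, t k =
      ((∏ i ∈ Finset.range k, ((1 : ℚ) / 2 + i)) / (Nat.factorial k)) ^ 4) :
    ∃ (c : ℤ) (x : Polynomial ℤ), ∀ k : ℕ,
      (Nat.factorial μ : ℚ) * (4 * (k : ℚ) + 1) ^ m * t k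
        = (c : ℚ) * (4 * (k : ℚ) + 1) * t k
          + (32 * ((k : ℚ) + 1) ^ 4 * ((x.eval (4 * ((k : ℤ) + 1)) : ℤ) : ℚ) * t (k + 1)
            - 32 * (k : ℚ) ^ 4 * ((x.eval (4 * (k : ℤ)) : ℤ) : ℚ) * t k) := by
  obtain ⟨c, x, hx⟩ := exists_telescoping_of_mem_deltaSpan
    (eight_mul_factorial_smul_X_pow_mem_deltaSpan μ) (sixteen_mul_succ_pow_four_mul_term_succ t ht)
  have hmμ : m = 2 * μ + 1 := by obtain ⟨r, rfl⟩ := hm; omega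
  refine ⟨c, x, fun k => ?_⟩
  have hk := hx k
  rw [eval_smul, eval_pow, eval_X, smul_eq_mul] at hk
  push_cast at hk
  rw [hmμ]
  linear_combination hk / 8

/-- for t_k = ((1/2)_k/(1)_k)^4 and odd positive m with μ = (m-1)/2,
there are an integer c and x ∈ ℤ[k] with
μ!·(4k+1)^m t_k = c(4k+1) t_k + Δ_k(32 k^4 x(4k) t_k). -/
theorem stmt16 (m : ℕ) (hm : Odd m) (hm0 : 0 < m) (μ : ℕ) (hμ : μ = (m - 1) / 2)
    (t : ℕ → ℚ)
    (ht : ∀ k : ℕ, t k =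
      ((∏ i ∈ Finset.range k, ((1 : ℚ) / 2 + i)) / (Nat.factorial k)) ^ 4) :
    ∃ (c : ℤ) (x : Polynomial ℤ), ∀ k : ℕ,
      (Nat.factorial μ : ℚ) * (4 * (k : ℚ) + 1) ^ m * t k
        = (c : ℚ) * (4 * (k : ℚ) + 1) * t k
          + (32 * ((k : ℚ) + 1) ^ 4 * ((x.eval (4 * ((k : ℤ) + 1)) : ℤ) : ℚ) * t (k + 1)
            - 32 * (k : ℚ) ^ 4 * ((x.eval (4 * (k : ℤ)) : ℤ) : ℚ) * t k) :=
  stmt16_general m hm μ hμ t ht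
end

section
/- With t_k = ((1/2)_k/(1)_k)^4, the identity (4k+1)^{11} t_k + 10515·(4k+1) t_k = Δ_k( 32 k^4 p(k) t_k ) holds for all integers k ≥ 0, where p(k) = (1/5)(4k-1)^8 - (249/20)(4k-1)^6 + (20207/60)(4k-1)^4 - (89909/20)(4k-1)^2 + 524029/20. -/
/-- with t_k = ((1/2)_k/(1)_k)^4 and
p(y) = (1/5)(4y-1)^8 - (249/20)(4y-1)^6 + (20207/60)(4y-1)^4 - (89909/20)(4y-1)^2 + 524029/20,
we have (4k+1)^{11} t_k + 10515(4k+1) t_k = Δ_k(32 k^4 p(k) t_k). -/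
theorem stmt18 (t : ℕ → ℚ)
    (ht : ∀ k : ℕ, t k =
      ((∏ i ∈ Finset.range k, ((1 : ℚ) / 2 + i)) / (Nat.factorial k)) ^ 4)
    (P : ℚ → ℚ)
    (hP : ∀ y : ℚ, P y = (1 / 5) * (4 * y - 1) ^ 8 - (249 / 20) * (4 * y - 1) ^ 6
      + (20207 / 60) * (4 * y - 1) ^ 4 - (89909 / 20) * (4 * y - 1) ^ 2 + 524029 / 20) :
    ∀ k : ℕ,
      (4 * (k : ℚ) + 1) ^ 11 * t k + 10515 * (4 * (k : ℚ) + 1) * t k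
        = 32 * ((k : ℚ) + 1) ^ 4 * P ((k : ℚ) + 1) * t (k + 1)
          - 32 * (k : ℚ) ^ 4 * P (k : ℚ) * t k := by
  intro k
  have hk1 : ((k : ℚ) + 1) ≠ 0 := by positivity
  have hfac : ((Nat.factorial k : ℚ)) ≠ 0 := by
    exact_mod_cast Nat.factorial_ne_zero k
  have hstep : t (k + 1) = ((1 / 2 + (k : ℚ)) ^ 4 / ((k : ℚ) + 1) ^ 4) * t k := by
    rw [ht (k + 1), ht k, Finset.prod_range_succ, Nat.factorial_succ]
    push_cast
    field_simp
  rw [hstep, hP, hP]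
  field_simp
  ring
end
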